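/- arXiv:1901.03700 — 3 statements merged into one kernel-verified Lean document; each statement's English description precedes it below -/
import Mathlib

section
/- Inversion formula: for every n ≥ 0, x^n = ∑_{k=0}^{n} C(n,k) · (k!/(m+k)!) · B_{n-k}^{[m-1]}(x). -/
open scoped Nat Real

/-- The partial sum `∑_{l=0}^{m-1} z^l / l!` of the exponential series. -/
noncomputable def expPartialSum (m : ℕ) : PowerSeries ℝ :=
  ∑ l ∈ Finset.range m, PowerSeries.C ((1 : ℝ) / l !) * PowerSeries.X ^ l

/-- `B : ℕ → ℝ → ℝ` is the family of generalized Bernoulli polynomials of level `m`,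
i.e. `z^m e^{xz} / (e^z - ∑_{l=0}^{m-1} z^l/l!) = ∑ B n x * z^n / n!`, stated
multiplicatively. -/
noncomputable def IsGenBernoulli (m : ℕ) (B : ℕ → ℝ → ℝ) : Prop :=
  ∀ x : ℝ,
    (PowerSeries.exp ℝ - expPartialSum m) * PowerSeries.mk (fun n => B n x / n !) =
      PowerSeries.X ^ m * PowerSeries.mk (fun n => x ^ n / n !)

/-!
Removing the first `m` terms of the exponential series leaves `z^m ∑_k z^k/(m+k)!`.
Cancelling `z^m` in the generating function identity gives
`(∑_k z^k/(m+k)!) · (∑_n B_n(x) z^n/n!) = e^{xz}`, and comparing the coefficients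
of `z^n` and multiplying by `n!` is the inversion formula.
-/

open PowerSeries

theorem coeff_expPartialSum (m j : ℕ) :
    coeff j (expPartialSum m) = if j < m then (1 : ℝ) / j ! else 0 := by
  simp [expPartialSum, coeff_X_pow]

theorem exp_sub_expPartialSum (m : ℕ) :
    exp ℝ - expPartialSum m = X ^ m * mk (fun k => (1 : ℝ) / (m + k)!) := by
  ext j
  rw [map_sub, coeff_exp, coeff_expPartialSum, coeff_X_pow_mul', coeff_mk]
  by_cases hj : m ≤ j
  · simp [hj, Nat.add_sub_cancel' hj, not_lt.mpr hj]
  · simp [hj, not_le.mp hj]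

theorem IsGenBernoulli.mk_mul_mk {m : ℕ} {B : ℕ → ℝ → ℝ} (hB : IsGenBernoulli m B) (x : ℝ) :
    mk (fun k => (1 : ℝ) / (m + k)!) * mk (fun n => B n x / n !) = mk (fun n => x ^ n / n !) := by
  refine mul_left_cancel₀ (pow_ne_zero m X_ne_zero) ?_
  rw [← mul_assoc, ← exp_sub_expPartialSum, hB x]

theorem stmt_5_general (m : ℕ) (B : ℕ → ℝ → ℝ) (hB : IsGenBernoulli m B)
    (n : ℕ) (x : ℝ) :
    x ^ n = ∑ k ∈ Finset.range (n + 1),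
      (n.choose k : ℝ) * ((k ! : ℝ) / ((m + k)! : ℝ)) * B (n - k) x := by
  have hcoeff := congrArg (coeff n) (hB.mk_mul_mk x)
  rw [coeff_mul, Finset.Nat.sum_antidiagonal_eq_sum_range_succ_mk, coeff_mk,
    eq_div_iff (by positivity), Finset.sum_mul] at hcoeff
  rw [← hcoeff]
  refine Finset.sum_congr rfl fun k hk => ?_
  have hkn : k ≤ n := Nat.lt_succ_iff.mp (Finset.mem_range.mp hk)
  simp only [coeff_mk]
  rw [Nat.cast_choose ℝ hkn]
  field_simp

theorem stmt_5 (m : ℕ) (hm : 0 < m) (B : ℕ → ℝ → ℝ) (hB : IsGenBernoulli m B)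
    (n : ℕ) (x : ℝ) :
    x ^ n = ∑ k ∈ Finset.range (n + 1),
      (n.choose k : ℝ) * ((k ! : ℝ) / ((m + k)! : ℝ)) * B (n - k) x :=
  stmt_5_general m B hB n x
end

section
/- For every m ∈ ℕ, ζ(2) = (2π²/m!)[B_2^{[m-1]}/2 + (m!/4)·((m-1)/(m+1)) - (m!/6)·((m-1)/((m+1)²))·((m²+2m-2)/(m+2))], where B_2^{[m-1]} = B_2^{[m-1]}(0). In particular, for m = 1 this reduces to ζ(2) = π² B_2 · 2 · 1/2! = π²/6. -/
open scoped Nat Real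

/-!
Since `e^z - ∑_{l<m} z^l/l!` starts with `z^m / m!`, comparing the coefficients of `z^m`,
`z^(m+1)`, `z^(m+2)` in the defining identity at `x = 0` gives `B_0 = m!`,
`B_1 = -m!/(m+1)` and `B_2 = 2 m!/((m+1)^2 (m+2))`. With this value of `B_2` the bracket
equals `m!/12`, so both sides are `π^2/6 = ζ(2)`.
-/

open PowerSeries (coeff exp mk coeff_mk coeff_exp coeff_mul coeff_X_pow coeff_X_pow_mul)

lemma coeff_exp_sub_expPartialSum (m i : ℕ) :
    coeff i (exp ℝ - expPartialSum m) = if i < m then 0 else (1 : ℝ) / i ! := by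
  have hP : coeff i (expPartialSum m) = if i < m then (1 : ℝ) / i ! else 0 := by
    simp [expPartialSum, map_sum, coeff_X_pow, mul_ite]
  rw [map_sub, coeff_exp, hP]
  split_ifs <;> simp

namespace IsGenBernoulli

variable {m : ℕ} {B : ℕ → ℝ → ℝ}

theorem sum_range_div_factorial_mul_factorial (hB : IsGenBernoulli m B) (k : ℕ) (x : ℝ) :
    ∑ j ∈ Finset.range (k + 1), B (k - j) x / ((k - j)! * (m + j)!) = x ^ k / k ! := by
  have h := congrArg (coeff (m + k)) (hB x)
  rw [add_comm m k, coeff_X_pow_mul, coeff_mul, coeff_mk,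
    Finset.Nat.sum_antidiagonal_eq_sum_range_succ
      (fun i j => coeff i (exp ℝ - expPartialSum m) * coeff j (mk fun n => B n x / n !)),
    Nat.succ_eq_add_one, show k + m + 1 = m + (k + 1) by ring, Finset.sum_range_add,
    Finset.sum_eq_zero fun i hi => by
      rw [coeff_exp_sub_expPartialSum, if_pos (Finset.mem_range.mp hi), zero_mul],
    zero_add] at h
  rw [← h]
  refine Finset.sum_congr rfl fun j hj => ?_
  have hjk : j < k + 1 := Finset.mem_range.mp hj
  rw [coeff_exp_sub_expPartialSum, if_neg (by omega), coeff_mk,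
    show k + m - (m + j) = k - j by omega]
  field_simp

theorem apply_zero (hB : IsGenBernoulli m B) (x : ℝ) : B 0 x = m ! := by
  have h := hB.sum_range_div_factorial_mul_factorial 0 x
  simp only [zero_add, Finset.sum_range_one, Nat.sub_self, Nat.factorial_zero, Nat.cast_one,
    one_mul, pow_zero, div_one, add_zero] at h
  field_simp at h
  exact h

theorem apply_one_zero (hB : IsGenBernoulli m B) : B 1 0 = -(m ! : ℝ) / (m + 1) := by
  have h : B 1 0 / m ! + m ! / ((m + 1) * m !) = 0 := by
    simpa [Finset.sum_range_succ, hB.apply_zero, Nat.factorial_succ] using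
      hB.sum_range_div_factorial_mul_factorial 1 0
  field_simp at h ⊢
  linarith

theorem apply_two_zero (hB : IsGenBernoulli m B) :
    B 2 0 = 2 * m ! / (((m : ℝ) + 1) ^ 2 * (m + 2)) := by
  have h : B 2 0 / (2 * m !) + B 1 0 / ((m + 1) * m !) + m ! / ((m + 1 + 1) * ((m + 1) * m !))
      = 0 := by
    simpa [Finset.sum_range_succ, hB.apply_zero, Nat.factorial_succ] using
      hB.sum_range_div_factorial_mul_factorial 2 0
  rw [hB.apply_one_zero] at h
  field_simp at h ⊢
  linarith

end IsGenBernoulli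

theorem stmt_12_general (m : ℕ) (B : ℕ → ℝ → ℝ) (hB : IsGenBernoulli m B) :
    riemannZeta 2 =
      (((2 * π ^ 2 / (m ! : ℝ)) *
        (B 2 0 / 2 + ((m ! : ℝ) / 4) * ((m - 1) / (m + 1)) -
          ((m ! : ℝ) / 6) * ((m - 1) / ((m + 1 : ℝ) ^ 2)) *
            (((m : ℝ) ^ 2 + 2 * m - 2) / (m + 2))) : ℝ) : ℂ) ∧
    riemannZeta 2 = ((π ^ 2 / 6 : ℝ) : ℂ) := by
  have hζ : riemannZeta 2 = ((π ^ 2 / 6 : ℝ) : ℂ) := by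
    rw [riemannZeta_two]; push_cast; ring
  refine ⟨?_, hζ⟩
  rw [hζ, hB.apply_two_zero]
  congr 1
  field_simp
  ring

theorem stmt_12 (m : ℕ) (hm : 0 < m) (B : ℕ → ℝ → ℝ) (hB : IsGenBernoulli m B) :
    riemannZeta 2 =
      (((2 * π ^ 2 / (m ! : ℝ)) *
        (B 2 0 / 2 + ((m ! : ℝ) / 4) * ((m - 1) / (m + 1)) -
          ((m ! : ℝ) / 6) * ((m - 1) / ((m + 1 : ℝ) ^ 2)) *
            (((m : ℝ) ^ 2 + 2 * m - 2) / (m + 2))) : ℝ) : ℂ) ∧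
    riemannZeta 2 = ((π ^ 2 / 6 : ℝ) : ℂ) :=
  stmt_12_general m B hB
end

section
/- Integral-series comparison via level-m Euler–Maclaurin: let m, r ∈ ℕ, f ∈ C^r[1,∞). Assume the series ρ_r^{[m-1]}(1,∞) := lim_{q→∞} (1/m!) ∑_{j=2}^{q-1} ∑_{k=2}^{r} ((-1)^{k+1}/k!)(B_k^{[m-1]}(1) - B_k^{[m-1]}) f^{(k-1)}(j) converges, that ∫_1^∞ |f^{(r)}(t)| dt converges, and that lim_{n→∞} f(n) exists and is finite. Then ∫_1^∞ f(t) dt converges if and only if ∑_{j=1}^∞ f(j) converges. -/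
open scoped Nat Real

/-!
Integrating by parts `r` times on each `[j, j + 1]` against a chain of kernels `Q k`
(`Q 0 = 1`, `(Q (k + 1))' = Q k`, with jumps `Q k 1 - Q k 0` equal to the coefficients of the
series `ρ`) writes `∫₁ⁿ f - ∑_{j ≤ n} f j`, up to a constant, as a partial sum of `ρ`, plus
boundary terms `± Q (i + 1) 0 * (f⁽ⁱ⁾ n - f⁽ⁱ⁾ 1)` for `i < r`, plus a remainder
that converges absolutely because `f⁽ʳ⁾` is integrable. The boundary terms converge because
`f n` does and `f⁽ⁱ⁾ → 0` for `0 < i < r`: the `i`-th forward difference of `f` at `n` tends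
to `0` and equals `f⁽ⁱ⁾ ξ` for some `ξ ∈ [n, n + i]`, while `f⁽ⁱ⁾` varies less and less over
windows of bounded length (downward induction on `i`, starting from the convergence of
`f⁽ʳ⁻¹⁾`). So the integral up to `n` and the partial sum converge together; real upper limits
are handled by `f → 0`, which follows in the same way from the convergence of the series.
-/

open Filter Set MeasureTheory Topology intervalIntegral
open scoped fwdDiff

def VanishingOscillation (g : ℝ → ℝ) : Prop :=
  ∀ (c : ℝ) (ξ : ℝ → ℝ), (∀ᶠ x in atTop, |ξ x - x| ≤ c) →
    Tendsto (fun x => g (ξ x) - g x) atTop (𝓝 0)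

lemma tendsto_atTop_of_eventually_abs_sub_le {c : ℝ} {ξ : ℝ → ℝ}
    (hξ : ∀ᶠ x in atTop, |ξ x - x| ≤ c) : Tendsto ξ atTop atTop := by
  refine tendsto_atTop_mono' atTop ?_ (tendsto_atTop_add_const_right atTop (-c) tendsto_id)
  filter_upwards [hξ] with x hx
  have := neg_abs_le (ξ x - x)
  simp only [id]
  linarith

namespace VanishingOscillation

variable {g : ℝ → ℝ}

lemma of_tendsto {L : ℝ} (hg : Tendsto g atTop (𝓝 L)) : VanishingOscillation g := by
  intro c ξ hξ
  simpa using (hg.comp (tendsto_atTop_of_eventually_abs_sub_le hξ)).sub hg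

lemma of_hasDerivAt {g' : ℝ → ℝ} {a : ℝ} (hg : ∀ x > a, HasDerivAt g (g' x) x)
    (hg' : Tendsto g' atTop (𝓝 0)) : VanishingOscillation g := by
  intro c ξ hξ
  obtain ⟨x₀, hx₀⟩ := hξ.exists
  have hc : 0 ≤ c := (abs_nonneg _).trans hx₀
  rw [Metric.tendsto_nhds]
  intro ε hε
  obtain ⟨N, hN⟩ := eventually_atTop.1 <|
    (hg'.eventually (Metric.ball_mem_nhds 0 (div_pos hε (by linarith : (0:ℝ) < c + 1)))).and
      (eventually_gt_atTop a)
  filter_upwards [hξ, (tendsto_atTop_of_eventually_abs_sub_le hξ).eventually_ge_atTop N,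
    eventually_ge_atTop N] with x hξx hξN hxN
  have hbound := (convex_Ici N).norm_image_sub_le_of_norm_hasDerivWithin_le
    (fun y hy => (hg y (hN y hy).2).hasDerivWithinAt)
    (fun y hy => (mem_ball_zero_iff.1 (hN y hy).1).le) hxN hξN
  rw [Real.dist_eq, sub_zero]
  calc |g (ξ x) - g x| ≤ ε / (c + 1) * |ξ x - x| := hbound
    _ ≤ ε / (c + 1) * c := by gcongr
    _ < ε := by rw [div_mul_eq_mul_div, div_lt_iff₀ (by linarith)]; nlinarith

end VanishingOscillation

lemma tendsto_fwdDiff_natCast {g : ℝ → ℝ} {L : ℝ} (hg : Tendsto (fun n : ℕ => g n) atTop (𝓝 L)) :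
    Tendsto (fun n : ℕ => Δ_[1] g n) atTop (𝓝 0) := by
  have hsucc : Tendsto (fun n : ℕ => g (n + 1)) atTop (𝓝 L) := by
    simpa using (tendsto_add_atTop_iff_nat 1).2 hg
  simpa [fwdDiff] using hsucc.sub hg

lemma tendsto_fwdDiff_iter_natCast {g : ℝ → ℝ} {L : ℝ}
    (hg : Tendsto (fun n : ℕ => g n) atTop (𝓝 L)) {i : ℕ} (hi : i ≠ 0) :
    Tendsto (fun n : ℕ => ((Δ_[1])^[i] g) n) atTop (𝓝 0) := by
  obtain ⟨i, rfl⟩ := Nat.exists_eq_succ_of_ne_zero hi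
  induction i with
  | zero => exact tendsto_fwdDiff_natCast hg
  | succ i ih =>
    simp only [Function.iterate_succ_apply'] at ih ⊢
    exact tendsto_fwdDiff_natCast (ih (Nat.succ_ne_zero _))

lemma exists_fwdDiff_iter_eq {G : ℕ → ℝ → ℝ} {a : ℝ} {i : ℕ}
    (hG : ∀ k < i, ∀ x ≥ a, HasDerivAt (G k) (G (k + 1) x) x) :
    ∃ ξ ∈ Icc a (a + i), ((Δ_[1])^[i] (G 0)) a = G i ξ := by
  induction i generalizing G with
  | zero => exact ⟨a, by simp, rfl⟩
  | succ i ih =>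
    have hΔG : ∀ k < i, ∀ x ≥ a,
        HasDerivAt (Δ_[1] (G k)) (Δ_[1] (G (k + 1)) x) x := fun k hk x hx =>
      ((hG k (by omega) (x + 1) (by linarith)).comp_add_const x 1).sub (hG k (by omega) x hx)
    obtain ⟨ξ, hξ, hξeq⟩ := ih (G := fun k => Δ_[1] (G k)) hΔG
    obtain ⟨η, hη, hηeq⟩ := exists_hasDerivAt_eq_slope (G i) (G (i + 1)) (lt_add_one ξ)
      (fun x hx => (hG i (by omega) x (by linarith [hξ.1, hx.1])).continuousAt.continuousWithinAt)
      (fun x hx => hG i (by omega) x (by linarith [hξ.1, hx.1]))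
    refine ⟨η, ⟨by linarith [hξ.1, hη.1], by push_cast; linarith [hξ.2, hη.2]⟩, ?_⟩
    rw [Function.iterate_succ_apply, hξeq, hηeq, add_sub_cancel_left, div_one]
    rfl

lemma tendsto_of_tendsto_fwdDiff_iter {G : ℕ → ℝ → ℝ} {a M : ℝ} {i : ℕ}
    (hG : ∀ k < i, ∀ x ≥ a, HasDerivAt (G k) (G (k + 1) x) x)
    (hΔ : Tendsto (fun n : ℕ => ((Δ_[1])^[i] (G 0)) n) atTop (𝓝 M))
    (hosc : VanishingOscillation (G i)) : Tendsto (G i) atTop (𝓝 M) := by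
  have hmvt : ∀ n : ℕ, ∃ ξ, a ≤ n → ξ ∈ Icc (n : ℝ) (n + i) ∧ ((Δ_[1])^[i] (G 0)) n = G i ξ := by
    intro n
    by_cases hn : a ≤ n
    · obtain ⟨ξ, hξ, hΔξ⟩ := exists_fwdDiff_iter_eq fun k hk x hx => hG k hk x (hn.trans hx)
      exact ⟨ξ, fun _ => ⟨hξ, hΔξ⟩⟩
    · exact ⟨0, fun h => absurd h hn⟩
  choose ξ hξ using hmvt
  have hfloor : Tendsto (fun x : ℝ => ⌊x⌋₊) atTop atTop := tendsto_nat_floor_atTop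
  have hlarge : ∀ᶠ x : ℝ in atTop, a ≤ ⌊x⌋₊ ∧ 0 ≤ x :=
    ((tendsto_natCast_atTop_atTop.comp hfloor).eventually_ge_atTop a).and (eventually_ge_atTop 0)
  have hclose : ∀ᶠ x in atTop, |ξ ⌊x⌋₊ - x| ≤ i + 1 := by
    filter_upwards [hlarge] with x ⟨ha, hx⟩
    have hξx := (hξ _ ha).1
    have := Nat.floor_le hx
    have := Nat.lt_floor_add_one x
    rw [abs_le]
    constructor <;> linarith [hξx.1, hξx.2]
  rw [← sub_zero M]
  refine ((hΔ.comp hfloor).sub (hosc _ _ hclose)).congr' ?_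
  filter_upwards [hlarge] with x ⟨ha, _⟩
  simp [(hξ _ ha).2]

lemma VanishingOscillation.tendsto_of_tendsto_natCast {g : ℝ → ℝ} {L : ℝ}
    (hg : VanishingOscillation g) (hL : Tendsto (fun n : ℕ => g n) atTop (𝓝 L)) :
    Tendsto g atTop (𝓝 L) :=
  tendsto_of_tendsto_fwdDiff_iter (G := fun _ => g) (a := 0) (i := 0) (by simp) hL hg

theorem ContDiffOn.hasDerivAt_iteratedDerivWithin {𝕜 F : Type*} [NontriviallyNormedField 𝕜]
    [NormedAddCommGroup F] [NormedSpace 𝕜 F] {f : 𝕜 → F} {s : Set 𝕜} {n : ℕ} {k : ℕ} {x : 𝕜}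
    (hf : ContDiffOn 𝕜 n f s) (hs : UniqueDiffOn 𝕜 s) (hk : k < n) (hx : s ∈ 𝓝 x) :
    HasDerivAt (iteratedDerivWithin k f s) (iteratedDerivWithin (k + 1) f s x) x := by
  rw [iteratedDerivWithin_succ, derivWithin_of_mem_nhds hx]
  exact ((hf.differentiableOn_iteratedDerivWithin (by exact_mod_cast hk) hs) x
    (mem_of_mem_nhds hx)).differentiableAt hx |>.hasDerivAt

section Decay

variable {f : ℝ → ℝ} {r : ℕ}

lemma hasDerivAt_iteratedDerivWithin_Ici (hf : ContDiffOn ℝ r f (Ici 1)) {k : ℕ} (hk : k < r)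
    {x : ℝ} (hx : 1 < x) :
    HasDerivAt (iteratedDerivWithin k f (Ici 1)) (iteratedDerivWithin (k + 1) f (Ici 1) x) x :=
  hf.hasDerivAt_iteratedDerivWithin (uniqueDiffOn_Ici 1) hk (Ici_mem_nhds hx)

lemma vanishingOscillation_iteratedDerivWithin (hf : ContDiffOn ℝ r f (Ici 1))
    (hint : IntegrableOn (iteratedDerivWithin r f (Ici 1)) (Ici 1)) {i : ℕ} (hi : i < r)
    (hnext : i + 1 < r → Tendsto (iteratedDerivWithin (i + 1) f (Ici 1)) atTop (𝓝 0)) :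
    VanishingOscillation (iteratedDerivWithin i f (Ici 1)) := by
  have hderiv : ∀ x > 1, HasDerivAt (iteratedDerivWithin i f (Ici 1))
      (iteratedDerivWithin (i + 1) f (Ici 1) x) x :=
    fun x hx => hasDerivAt_iteratedDerivWithin_Ici hf hi hx
  rcases (Nat.succ_le_of_lt hi).lt_or_eq with hlt | rfl
  · exact .of_hasDerivAt hderiv (hnext hlt)
  · exact .of_tendsto (tendsto_limUnder_of_hasDerivAt_of_integrableOn_Ioi hderiv
      (hint.mono_set Ioi_subset_Ici_self))

lemma tendsto_iteratedDerivWithin_nhds_zero (hf : ContDiffOn ℝ r f (Ici 1))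
    (hint : IntegrableOn (iteratedDerivWithin r f (Ici 1)) (Ici 1)) {L : ℝ}
    (hlim : Tendsto (fun n : ℕ => f n) atTop (𝓝 L)) {i : ℕ} (hi0 : i ≠ 0) (hi : i < r) :
    Tendsto (iteratedDerivWithin i f (Ici 1)) atTop (𝓝 0) := by
  have step : ∀ i ≠ 0, i < r →
      (i + 1 < r → Tendsto (iteratedDerivWithin (i + 1) f (Ici 1)) atTop (𝓝 0)) →
      Tendsto (iteratedDerivWithin i f (Ici 1)) atTop (𝓝 0) := fun i hi0 hi hnext =>
    tendsto_of_tendsto_fwdDiff_iter (G := fun k => iteratedDerivWithin k f (Ici 1)) (a := 2)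
      (fun k hk x hx => hasDerivAt_iteratedDerivWithin_Ici hf (hk.trans hi) (by linarith))
      (by simpa only [iteratedDerivWithin_zero] using tendsto_fwdDiff_iter_natCast hlim hi0)
      (vanishingOscillation_iteratedDerivWithin hf hint hi hnext)
  obtain ⟨d, hd⟩ : ∃ d, r = i + 1 + d := ⟨r - (i + 1), by omega⟩
  induction d generalizing i with
  | zero => exact step i hi0 hi fun h => by omega
  | succ d ih => exact step i hi0 hi fun _ => ih (by omega) (by omega) (by omega)

end Decay

/-- For the level-`m` Bernoulli polynomials, `k ↦ B_k^{[m-1]} / (m! k!)` is such a chain; the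
argument only uses the differences `Q k 1 - Q k 0`. -/
def IsAntiderivChain (Q : ℕ → ℝ → ℝ) : Prop :=
  Q 0 = 1 ∧ ∀ k x, HasDerivAt (Q (k + 1)) (Q k x) x

namespace IsAntiderivChain

variable {Q : ℕ → ℝ → ℝ}

lemma continuous (hQ : IsAntiderivChain Q) (k : ℕ) : Continuous (Q k) := by
  cases k with
  | zero => rw [hQ.1]; exact continuous_const
  | succ k => exact continuous_iff_continuousAt.2 fun x => (hQ.2 k x).continuousAt

lemma sub_eq_integral (hQ : IsAntiderivChain Q) (k : ℕ) :
    Q (k + 1) 1 - Q (k + 1) 0 = ∫ t in (0 : ℝ)..1, Q k t :=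
  (integral_eq_sub_of_hasDerivAt (fun x _ => hQ.2 k x)
    ((hQ.continuous k).intervalIntegrable _ _)).symm

end IsAntiderivChain

/-- `Q (k + 1) x = ∫₀ˣ Q k + c k`, with `c k` chosen so that `∫₀¹ Q (k + 1) = δ (k + 2)`. -/
noncomputable def antiderivChain (δ : ℕ → ℝ) : ℕ → ℝ → ℝ
  | 0 => 1
  | k + 1 => fun x => (∫ t in (0 : ℝ)..x, antiderivChain δ k t) +
      (δ (k + 2) - ∫ y in (0 : ℝ)..1, ∫ t in (0 : ℝ)..y, antiderivChain δ k t)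

lemma isAntiderivChain_antiderivChain (δ : ℕ → ℝ) : IsAntiderivChain (antiderivChain δ) := by
  refine ⟨rfl, fun k => ?_⟩
  suffices Continuous (antiderivChain δ k) from fun x =>
    (this.integral_hasStrictDerivAt 0 x).hasDerivAt.add_const _
  induction k with
  | zero => exact continuous_const
  | succ k ih =>
    exact (continuous_primitive (fun _ _ => ih.intervalIntegrable _ _) 0).add continuous_const

lemma exists_isAntiderivChain (δ : ℕ → ℝ) :
    ∃ Q, IsAntiderivChain Q ∧ ∀ k ≥ 2, Q k 1 - Q k 0 = δ k := by
  refine ⟨antiderivChain δ, isAntiderivChain_antiderivChain δ, fun k hk => ?_⟩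
  obtain ⟨k, rfl⟩ := Nat.exists_eq_add_of_le' hk
  have hQ := isAntiderivChain_antiderivChain δ
  have hprim : Continuous fun y => ∫ t in (0 : ℝ)..y, antiderivChain δ k t :=
    continuous_primitive (fun _ _ => (hQ.continuous k).intervalIntegrable _ _) 0
  rw [hQ.sub_eq_integral, antiderivChain, integral_add (hprim.intervalIntegrable _ _)
    intervalIntegrable_const]
  simp

section EulerMaclaurin

variable {f : ℝ → ℝ} {r : ℕ} {Q : ℕ → ℝ → ℝ}

lemma integral_eq_sum_add_remainder (hf : ContDiffOn ℝ r f (Ici 1)) (hQ : IsAntiderivChain Q)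
    {a : ℝ} (ha : 1 ≤ a) {d : ℕ} (hd : d ≤ r) :
    ∫ t in a..a + 1, f t =
      ∑ i ∈ Finset.range d, (-1) ^ i * (Q (i + 1) 1 * iteratedDerivWithin i f (Ici 1) (a + 1) -
        Q (i + 1) 0 * iteratedDerivWithin i f (Ici 1) a) +
      (-1) ^ d * ∫ t in a..a + 1, iteratedDerivWithin d f (Ici 1) t * Q d (t - a) := by
  induction d with
  | zero => simp [hQ.1]
  | succ d ih =>
    have hsub : Icc a (a + 1) ⊆ Ici 1 := fun t ht => ha.trans ht.1
    have hcont : ∀ k ≤ r, ContinuousOn (iteratedDerivWithin k f (Ici 1)) (uIcc a (a + 1)) :=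
      fun k hk => (hf.continuousOn_iteratedDerivWithin (by exact_mod_cast hk)
        (uniqueDiffOn_Ici 1)).mono (by rw [uIcc_of_le (by linarith)]; exact hsub)
    have hshift : ∀ k, Continuous fun t => Q k (t - a) :=
      fun k => (hQ.continuous k).comp (continuous_sub_right a)
    have hibp := integral_mul_deriv_eq_deriv_mul_of_hasDerivAt (hcont d (by omega))
      (hshift (d + 1)).continuousOn
      (fun x hx => hasDerivAt_iteratedDerivWithin_Ici hf (by omega)
        (ha.trans_lt (by simpa [min_eq_left (by linarith : a ≤ a + 1)] using hx.1)))
      (fun x _ => (hQ.2 d (x - a)).comp_sub_const x a)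
      ((hcont (d + 1) hd).intervalIntegrable) ((hshift d).intervalIntegrable _ _)
    rw [ih (by omega), hibp, Finset.sum_range_succ]
    simp only [add_sub_cancel_left, sub_self]
    ring

/-- The summand of the series `ρ` at `x`, with the coefficients
`δ k = (B_k^{[m-1]}(1) - B_k^{[m-1]}) / (m! k!)` left arbitrary. -/
noncomputable def emCorrection (δ : ℕ → ℝ) (r : ℕ) (f : ℝ → ℝ) (x : ℝ) : ℝ :=
  ∑ k ∈ Finset.Icc 2 r, (-1) ^ (k + 1) * δ k * iteratedDerivWithin (k - 1) f (Ici 1) x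

lemma sum_range_mul_sub_eq_add_emCorrection (hQ : IsAntiderivChain Q) {δ : ℕ → ℝ}
    (hδ : ∀ k ≥ 2, Q k 1 - Q k 0 = δ k) (hr : 1 ≤ r) (x : ℝ) :
    ∑ i ∈ Finset.range r, (-1) ^ i * (Q (i + 1) 1 - Q (i + 1) 0) *
      iteratedDerivWithin i f (Ici 1) x = f x + emCorrection δ r f x := by
  obtain ⟨r, rfl⟩ := Nat.exists_eq_add_of_le' hr
  rw [Finset.sum_range_succ', emCorrection, ← Finset.Ico_add_one_right_eq_Icc,
    Finset.sum_Ico_eq_sum_range, add_comm]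
  simp only [hQ.sub_eq_integral 0, hQ.1, Pi.one_apply, integral_one, sub_zero,
    iteratedDerivWithin_zero, pow_zero, one_mul]
  congr 1
  refine Finset.sum_congr rfl fun i _ => ?_
  rw [hδ _ (by omega), show 2 + i - 1 = i + 1 by omega, add_comm 2 i]
  ring

lemma integral_eq_sum_add_boundary_add_remainder (hf : ContDiffOn ℝ r f (Ici 1))
    (hQ : IsAntiderivChain Q) {δ : ℕ → ℝ} (hδ : ∀ k ≥ 2, Q k 1 - Q k 0 = δ k) (hr : 1 ≤ r)
    (n : ℕ) :
    ∫ t in (1 : ℝ)..n + 1, f t =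
      ∑ j ∈ Finset.range n, (f (j + 2) + emCorrection δ r f (j + 2)) +
      ∑ i ∈ Finset.range r, (-1) ^ i * Q (i + 1) 0 *
        (iteratedDerivWithin i f (Ici 1) (n + 1) - iteratedDerivWithin i f (Ici 1) 1) +
      (-1) ^ r * ∑ j ∈ Finset.range n,
        ∫ t in (1 + j : ℝ)..1 + j + 1, iteratedDerivWithin r f (Ici 1) t * Q r (t - (1 + j)) := by
  have hadj : ∫ t in (1 : ℝ)..n + 1, f t =
      ∑ j ∈ Finset.range n, ∫ t in (1 + j : ℝ)..1 + j + 1, f t := by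
    convert (sum_integral_adjacent_intervals (μ := volume) (f := f) (n := n)
      (a := fun j : ℕ => 1 + (j : ℝ)) fun k _ => ?_).symm using 1
    · simp [add_comm]
    · push_cast; simp only [add_assoc]
    · refine (hf.continuousOn.mono ?_).intervalIntegrable
      rw [uIcc_of_le (by push_cast; linarith)]
      exact fun t ht => le_trans (by simp) ht.1
  have hsplit : ∀ j : ℕ, ∫ t in (1 + j : ℝ)..1 + j + 1, f t =
      (f (j + 2) + emCorrection δ r f (j + 2)) +
      ∑ i ∈ Finset.range r, (-1) ^ i * Q (i + 1) 0 *
        (iteratedDerivWithin i f (Ici 1) (1 + (j + 1 : ℕ)) -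
          iteratedDerivWithin i f (Ici 1) (1 + j)) +
      (-1) ^ r * ∫ t in (1 + j : ℝ)..1 + j + 1,
        iteratedDerivWithin r f (Ici 1) t * Q r (t - (1 + j)) := by
    intro j
    rw [integral_eq_sum_add_remainder hf hQ (by simp) le_rfl,
      ← sum_range_mul_sub_eq_add_emCorrection hQ hδ hr, ← Finset.sum_add_distrib]
    congr 1
    refine Finset.sum_congr rfl fun i _ => ?_
    push_cast
    ring_nf
  rw [hadj, Finset.sum_congr rfl fun j _ => hsplit j, Finset.sum_add_distrib,
    Finset.sum_add_distrib, Finset.sum_comm (s := Finset.range n), ← Finset.mul_sum]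
  congr 2
  refine Finset.sum_congr rfl fun i _ => ?_
  rw [← Finset.mul_sum, Finset.sum_range_sub (fun j : ℕ => iteratedDerivWithin i f (Ici 1) (1 + j))]
  simp [add_comm]

end EulerMaclaurin

lemma summable_intervalIntegral_abs {g : ℝ → ℝ} {a : ℝ} (hg : IntegrableOn g (Ioi a)) :
    Summable fun j : ℕ => ∫ t in (a + j)..a + j + 1, |g t| := by
  have hgabs : IntegrableOn (fun t => |g t|) (Ioi a) := hg.abs
  refine summable_of_sum_range_le (c := ∫ t in Ioi a, |g t|)
    (fun j => integral_nonneg (by linarith) fun t _ => abs_nonneg _) fun n => ?_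
  calc ∑ j ∈ Finset.range n, ∫ t in (a + j)..a + j + 1, |g t| = ∫ t in a..a + n, |g t| := by
        convert sum_integral_adjacent_intervals (μ := volume) (n := n)
          (a := fun j : ℕ => a + j) (fun k _ => (intervalIntegrable_iff_integrableOn_Ioc_of_le
            (by push_cast; linarith)).2 (hgabs.mono_set fun t ht => ?_)) using 1
        · push_cast; simp only [add_assoc]
        · simp
        · show a < t
          linarith [ht.1, (Nat.cast_nonneg k : (0 : ℝ) ≤ k)]
    _ = ∫ t in Ioc a (a + n), |g t| := integral_of_le (by simp)
    _ ≤ ∫ t in Ioi a, |g t| :=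
      setIntegral_mono_set hgabs (ae_of_all _ fun _ => abs_nonneg _)
        Ioc_subset_Ioi_self.eventuallyLE

lemma summable_intervalIntegral_mul_comp_sub {g K : ℝ → ℝ} {a : ℝ} (hg : IntegrableOn g (Ioi a))
    (hK : Continuous K) :
    Summable fun j : ℕ => ∫ t in (a + j)..a + j + 1, g t * K (t - (a + j)) := by
  obtain ⟨M, hM⟩ := isCompact_Icc.exists_bound_of_continuousOn (hK.continuousOn (s := Icc 0 1))
  have hgabs : IntegrableOn (fun t => |g t|) (Ioi a) := hg.abs
  refine ((summable_intervalIntegral_abs hg).mul_left M).of_norm_bounded fun j => ?_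
  rw [← intervalIntegral.integral_const_mul]
  refine norm_integral_le_of_norm_le (by linarith) (ae_of_all _ fun t ht => ?_) ?_
  · rw [norm_mul, Real.norm_eq_abs, mul_comm]
    exact mul_le_mul_of_nonneg_right (hM _ ⟨by linarith [ht.1], by linarith [ht.2]⟩) (abs_nonneg _)
  · refine ((intervalIntegrable_iff_integrableOn_Ioc_of_le (by linarith)).2
      (hgabs.mono_set fun t ht => ?_)).const_mul M
    show a < t
    linarith [ht.1, (Nat.cast_nonneg j : (0 : ℝ) ≤ j)]

section Comparison

variable {f : ℝ → ℝ} {r : ℕ}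

lemma exists_tendsto_integral_sub_sum (hf : ContDiffOn ℝ r f (Ici 1))
    (hint : IntegrableOn (iteratedDerivWithin r f (Ici 1)) (Ici 1)) {δ : ℕ → ℝ} (hr : 1 ≤ r)
    (hρ : ∃ L, Tendsto (fun q : ℕ => ∑ j ∈ Finset.Icc 2 (q - 1), emCorrection δ r f j) atTop (𝓝 L))
    {L : ℝ} (hlim : Tendsto (fun n : ℕ => f n) atTop (𝓝 L)) :
    ∃ C, Tendsto (fun n : ℕ => (∫ t in (1 : ℝ)..n, f t) - ∑ j ∈ Finset.Icc 1 n, f j)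
      atTop (𝓝 C) := by
  obtain ⟨Q, hQ, hδ⟩ := exists_isAntiderivChain δ
  obtain ⟨ρ, hρ⟩ := hρ
  have hD : ∀ i < r, ∃ c,
      Tendsto (fun n : ℕ => iteratedDerivWithin i f (Ici 1) (n + 1)) atTop (𝓝 c) := by
    intro i hi
    rcases eq_or_ne i 0 with rfl | hi0
    · exact ⟨L, by simpa using (tendsto_add_atTop_iff_nat 1).2 hlim⟩
    · exact ⟨0, (tendsto_iteratedDerivWithin_nhds_zero hf hint hlim hi0 hi).comp
        (tendsto_atTop_add_const_right _ 1 tendsto_natCast_atTop_atTop)⟩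
  choose! c hc using hD
  have hcorr : Tendsto (fun n : ℕ => ∑ j ∈ Finset.range n, emCorrection δ r f (j + 2))
      atTop (𝓝 ρ) := by
    refine ((tendsto_add_atTop_iff_nat 2).2 hρ).congr fun n => ?_
    rw [show n + 2 - 1 = n + 1 by omega, ← Finset.Ico_add_one_right_eq_Icc,
      Finset.sum_Ico_eq_sum_range, show n + 1 + 1 - 2 = n by omega]
    refine Finset.sum_congr rfl fun j _ => ?_
    push_cast
    ring_nf
  have hbdry := tendsto_finsetSum (Finset.range r) fun i hi =>
    ((hc i (Finset.mem_range.1 hi)).sub_const (iteratedDerivWithin i f (Ici 1) 1)).const_mul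
      ((-1) ^ i * Q (i + 1) 0)
  have hrem := ((summable_intervalIntegral_mul_comp_sub (a := 1)
    (hint.mono_set Ioi_subset_Ici_self) (hQ.continuous r)).hasSum.tendsto_sum_nat).const_mul
    ((-1) ^ r)
  refine ⟨_, (tendsto_add_atTop_iff_nat 1).1
    ((((hcorr.add hbdry).add hrem).const_add (-f 1)).congr fun n => ?_)⟩
  push_cast
  rw [integral_eq_sum_add_boundary_add_remainder hf hQ hδ hr n, ← Finset.Ico_add_one_right_eq_Icc,
    Finset.sum_Ico_eq_sum_range, Nat.add_sub_cancel, Finset.sum_range_succ', Finset.sum_add_distrib]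
  push_cast
  ring_nf

theorem tendsto_integral_iff_tendsto_sum (hf : ContDiffOn ℝ r f (Ici 1))
    (hint : IntegrableOn (iteratedDerivWithin r f (Ici 1)) (Ici 1)) {δ : ℕ → ℝ} (hr : 1 ≤ r)
    (hρ : ∃ L, Tendsto (fun q : ℕ => ∑ j ∈ Finset.Icc 2 (q - 1), emCorrection δ r f j) atTop (𝓝 L))
    (hlim : ∃ L, Tendsto (fun n : ℕ => f n) atTop (𝓝 L)) :
    (∃ I, Tendsto (fun b : ℝ => ∫ t in (1 : ℝ)..b, f t) atTop (𝓝 I)) ↔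
      ∃ S, Tendsto (fun q : ℕ => ∑ j ∈ Finset.Icc 1 q, f j) atTop (𝓝 S) := by
  obtain ⟨L, hL⟩ := hlim
  obtain ⟨C, hC⟩ := exists_tendsto_integral_sub_sum hf hint hr hρ hL
  constructor
  · rintro ⟨I, hI⟩
    exact ⟨I - C, ((hI.comp tendsto_natCast_atTop_atTop).sub hC).congr fun n => by simp⟩
  · rintro ⟨S, hS⟩
    have hterm : Tendsto (fun n : ℕ => f n) atTop (𝓝 0) := by
      refine (tendsto_add_atTop_iff_nat 1).1 ?_
      simpa [Finset.sum_Icc_succ_top] using ((tendsto_add_atTop_iff_nat 1).2 hS).sub hS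
    have hf0 : Tendsto f atTop (𝓝 0) := by
      refine VanishingOscillation.tendsto_of_tendsto_natCast ?_ hterm
      simpa using vanishingOscillation_iteratedDerivWithin hf hint hr fun h =>
        tendsto_iteratedDerivWithin_nhds_zero hf hint hL one_ne_zero h
    have hcont : ContinuousOn f (Ioi 1) := hf.continuousOn.mono Ioi_subset_Ici_self
    have hprim : ∀ x > 1, HasDerivAt (fun b => ∫ t in (1 : ℝ)..b, f t) (f x) x := fun x hx =>
      integral_hasDerivAt_right (hf.continuousOn.mono
          (by rw [uIcc_of_le hx.le]; exact Icc_subset_Ici_self)).intervalIntegrable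
        (hcont.stronglyMeasurableAtFilter isOpen_Ioi x hx) (hcont.continuousAt (Ioi_mem_nhds hx))
    exact ⟨S + C, (VanishingOscillation.of_hasDerivAt hprim hf0).tendsto_of_tendsto_natCast
      ((hS.add hC).congr fun n => by ring)⟩

end Comparison

theorem stmt_19_general (m : ℕ) (B : ℕ → ℝ → ℝ)
    (r : ℕ) (hr : 1 ≤ r) (f : ℝ → ℝ) (hf : ContDiffOn ℝ r f (Set.Ici 1))
    (hρ : ∃ L : ℝ, Filter.Tendsto
      (fun q : ℕ => (1 / (m ! : ℝ)) *
        ∑ j ∈ Finset.Icc 2 (q - 1), ∑ k ∈ Finset.Icc 2 r,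
          ((-1 : ℝ) ^ (k + 1) / (k ! : ℝ)) * (B k 1 - B k 0) *
            iteratedDerivWithin (k - 1) f (Set.Ici 1) j)
      Filter.atTop (nhds L))
    (hint : MeasureTheory.IntegrableOn
      (fun t => |iteratedDerivWithin r f (Set.Ici 1) t|) (Set.Ici (1 : ℝ)))
    (hlim : ∃ L : ℝ, Filter.Tendsto (fun n : ℕ => f n) Filter.atTop (nhds L)) :
    (∃ I : ℝ, Filter.Tendsto (fun b : ℝ => ∫ t in (1 : ℝ)..b, f t)
        Filter.atTop (nhds I)) ↔
    (∃ S : ℝ, Filter.Tendsto (fun q : ℕ => ∑ j ∈ Finset.Icc 1 q, f j)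
        Filter.atTop (nhds S)) := by
  have hmeas := (hf.continuousOn_iteratedDerivWithin le_rfl
    (uniqueDiffOn_Ici 1)).aestronglyMeasurable (μ := volume) measurableSet_Ici
  refine tendsto_integral_iff_tendsto_sum hf ((integrable_norm_iff hmeas).1 hint)
    (δ := fun k => (B k 1 - B k 0) / (m ! * k !)) hr ?_ hlim
  obtain ⟨L, hL⟩ := hρ
  refine ⟨L, hL.congr fun q => ?_⟩
  simp only [emCorrection, Finset.mul_sum]
  refine Finset.sum_congr rfl fun j _ => Finset.sum_congr rfl fun k _ => ?_
  field_simp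

theorem stmt_19 (m : ℕ) (hm : 0 < m) (B : ℕ → ℝ → ℝ) (hB : IsGenBernoulli m B)
    (r : ℕ) (hr : 1 ≤ r) (f : ℝ → ℝ) (hf : ContDiffOn ℝ r f (Set.Ici 1))
    (hρ : ∃ L : ℝ, Filter.Tendsto
      (fun q : ℕ => (1 / (m ! : ℝ)) *
        ∑ j ∈ Finset.Icc 2 (q - 1), ∑ k ∈ Finset.Icc 2 r,
          ((-1 : ℝ) ^ (k + 1) / (k ! : ℝ)) * (B k 1 - B k 0) *
            iteratedDerivWithin (k - 1) f (Set.Ici 1) j)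
      Filter.atTop (nhds L))
    (hint : MeasureTheory.IntegrableOn
      (fun t => |iteratedDerivWithin r f (Set.Ici 1) t|) (Set.Ici (1 : ℝ)))
    (hlim : ∃ L : ℝ, Filter.Tendsto (fun n : ℕ => f n) Filter.atTop (nhds L)) :
    (∃ I : ℝ, Filter.Tendsto (fun b : ℝ => ∫ t in (1 : ℝ)..b, f t)
        Filter.atTop (nhds I)) ↔
    (∃ S : ℝ, Filter.Tendsto (fun q : ℕ => ∑ j ∈ Finset.Icc 1 q, f j)
        Filter.atTop (nhds S)) :=
  stmt_19_general m B r hr f hf hρ hint hlim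
end
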